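/- arXiv:1405.5477 — 2 statements merged into one kernel-verified Lean document; each statement's English description precedes it below -/
import Mathlib

section
/- For every integer n ≥ 1, (n+1)^{n−1} = (n!/2^n) · Σ_{T ∈ 𝒯_n} ∏_{v vertex of T} (1 + 1/h_v), where the sum is over all plane binary trees with n vertices (Postnikov's hook length formula). -/
/-!
Splitting a tree at its root shows that `S n = ∑_{T ∈ 𝒯_n} ∏_v (1 + 1/h_v)` satisfies
`S (n+1) = (n+2)/(n+1) · ∑_{i+j=n} S i · S j`, i.e. `n! S n` satisfies a binomial convolution
recurrence. The sequence `2^n (n+1)^(n-1)` satisfies the same recurrence by the Abel-type identity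
`(m+2) ∑_{i+j=m} C(m,i) (i+1)^(i-1) (j+1)^(j-1) = 2 (m+2)^m`. That identity comes from
`∑_k C(m,k) (k+1)^(k-1) (b-k-1)^(m-k) = b^m`: expanding `(b-k-1)^(m-k)` in powers of `b`, the
coefficient of `b^(m-r)` is an `r`-th forward difference of `x ↦ x^(r-1)`, which vanishes
for `r > 0`.
-/

open Finset

/-- The product over all vertices `v` of a plane binary tree of `f h_v`, where
`h_v` is the hook length of `v` (the number of vertices of the subtree rooted
at `v`). -/
def hookProd (f : ℕ → ℚ) : BinaryTree Unit → ℚ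
  | BinaryTree.nil => 1
  | BinaryTree.node _ l r => f (l.numNodes + r.numNodes + 1) * hookProd f l * hookProd f r

theorem sum_range_neg_one_pow_mul_choose_mul_pow_eq_zero {R : Type*} [CommRing R] {j n : ℕ}
    (h : j < n) (y : R) :
    ∑ k ∈ range (n + 1), (-1 : R) ^ (n - k) * n.choose k * (y + k) ^ j = 0 := by
  have := fwdDiff_iter_eq_sum_shift (1 : R) (fun r : R ↦ r ^ j) n y
  rw [fwdDiff_iter_pow_eq_zero_of_lt h] at this
  simpa [zsmul_eq_mul] using this.symm

-- At `k = 0` the base `k + 1` is `1`, so truncating the exponent `k - 1 = -1` to `0` is harmless.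
theorem sum_range_choose_mul_add_one_pow_mul_sub_pow {R : Type*} [CommRing R] (b : R) (m : ℕ) :
    ∑ k ∈ range (m + 1), m.choose k * ((k : R) + 1) ^ (k - 1) * (b - (k + 1)) ^ (m - k)
      = b ^ m := by
  set f : ℕ → ℕ → R := fun k i ↦
    m.choose k * ((k : R) + 1) ^ (k - 1) *
      ((-((k : R) + 1)) ^ i * b ^ (m - k - i) * (m - k).choose i)
  have expand : ∀ k ∈ range (m + 1),
      (m.choose k : R) * ((k : R) + 1) ^ (k - 1) * (b - (k + 1)) ^ (m - k)
        = ∑ i ∈ range (m + 1 - k), f k i := by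
    intro k hk
    rw [mem_range] at hk
    rw [sub_eq_neg_add, add_pow (-((k : R) + 1)) b, mul_sum, Nat.sub_add_comm (by omega)]
  have regroup : ∀ r ∈ range (m + 1), ∑ k ∈ range (r + 1), f k (r - k)
      = m.choose r * b ^ (m - r) *
          ∑ k ∈ range (r + 1), (-1 : R) ^ (r - k) * r.choose k * (1 + k) ^ (r - 1) := by
    intro r hr
    rw [mem_range] at hr
    rw [mul_sum]
    refine sum_congr rfl fun k hk ↦ ?_
    rw [mem_range] at hk
    have hchoose : (m.choose k : R) * (m - k).choose (r - k) = m.choose r * r.choose k := by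
      rw [← Nat.cast_mul, ← Nat.cast_mul,
        ← Nat.choose_mul (n := m) (k := r) (s := k) (by omega)]
    have hpow : ((k : R) + 1) ^ (k - 1) * ((k : R) + 1) ^ (r - k) = (1 + k) ^ (r - 1) := by
      rcases Nat.eq_zero_or_pos k with rfl | hk0
      · simp
      · rw [← pow_add, add_comm (1 : R)]
        congr 1
        omega
    simp only [f]
    rw [neg_pow, show m - k - (r - k) = m - r by omega]
    linear_combination ((-1 : R) ^ (r - k) * b ^ (m - r)) *
      ((m.choose k : R) * (m - k).choose (r - k) * hpow + (1 + k) ^ (r - 1) * hchoose)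
  rw [sum_congr rfl expand, ← sum_range_diag_flip, sum_congr rfl regroup, sum_range_succ']
  rw [sum_eq_zero fun r hr ↦ by
    rw [sum_range_neg_one_pow_mul_choose_mul_pow_eq_zero (by omega), mul_zero]]
  simp

theorem add_one_mul_add_one_pow_sub_one {R : Type*} [Semiring R] (k : ℕ) :
    ((k : R) + 1) * ((k : R) + 1) ^ (k - 1) = ((k : R) + 1) ^ k := by
  cases k with
  | zero => simp
  | succ k => rw [← pow_succ', Nat.add_sub_cancel]

theorem add_two_mul_sum_antidiagonal_choose_mul_add_one_pow_mul_add_one_pow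
    {R : Type*} [CommRing R] (m : ℕ) :
    ((m : R) + 2) * ∑ p ∈ antidiagonal m,
        m.choose p.1 * ((p.1 : R) + 1) ^ (p.1 - 1) * ((p.2 : R) + 1) ^ (p.2 - 1)
      = 2 * ((m : R) + 2) ^ m := by
  have abel : ∑ p ∈ antidiagonal m,
      m.choose p.1 * ((p.1 : R) + 1) ^ (p.1 - 1) * ((p.2 : R) + 1) ^ p.2 = ((m : R) + 2) ^ m := by
    rw [Nat.sum_antidiagonal_eq_sum_range_succ_mk,
      ← sum_range_choose_mul_add_one_pow_mul_sub_pow ((m : R) + 2) m]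
    refine sum_congr rfl fun k hk ↦ ?_
    rw [Nat.cast_sub (by simpa [Nat.lt_succ_iff] using hk)]
    ring_nf
  have swap : ∑ p ∈ antidiagonal m,
      m.choose p.1 * ((p.1 : R) + 1) ^ p.1 * ((p.2 : R) + 1) ^ (p.2 - 1)
        = ∑ p ∈ antidiagonal m,
      m.choose p.1 * ((p.1 : R) + 1) ^ (p.1 - 1) * ((p.2 : R) + 1) ^ p.2 := by
    rw [← Nat.sum_antidiagonal_swap]
    refine sum_congr rfl fun p hp ↦ ?_
    rw [HasAntidiagonal.mem_antidiagonal] at hp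
    rw [Prod.fst_swap, Prod.snd_swap, ← hp, Nat.choose_symm_add]
    ring
  calc ((m : R) + 2) * ∑ p ∈ antidiagonal m,
        m.choose p.1 * ((p.1 : R) + 1) ^ (p.1 - 1) * ((p.2 : R) + 1) ^ (p.2 - 1)
      = ∑ p ∈ antidiagonal m,
          (m.choose p.1 * ((p.1 : R) + 1) ^ p.1 * ((p.2 : R) + 1) ^ (p.2 - 1)
            + m.choose p.1 * ((p.1 : R) + 1) ^ (p.1 - 1) * ((p.2 : R) + 1) ^ p.2) := by
        rw [mul_sum]
        refine sum_congr rfl fun p hp ↦ ?_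
        rw [HasAntidiagonal.mem_antidiagonal] at hp
        rw [← add_one_mul_add_one_pow_sub_one p.1, ← add_one_mul_add_one_pow_sub_one p.2,
          ← hp]
        push_cast
        ring
    _ = 2 * ((m : R) + 2) ^ m := by
        rw [sum_add_distrib, swap, abel, two_mul]

def hookSum (f : ℕ → ℚ) (n : ℕ) : ℚ :=
  ∑ T ∈ BinaryTree.treesOfNumNodesEq n, hookProd f T

theorem hookSum_zero (f : ℕ → ℚ) : hookSum f 0 = 1 := by
  simp [hookSum, hookProd]

theorem hookSum_succ (f : ℕ → ℚ) (n : ℕ) :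
    hookSum f (n + 1) = f (n + 1) * ∑ p ∈ antidiagonal n, hookSum f p.1 * hookSum f p.2 := by
  rw [hookSum, BinaryTree.treesOfNumNodesEq_succ, sum_biUnion, mul_sum]
  · refine sum_congr rfl fun p hp ↦ ?_
    rw [sum_map, sum_product, hookSum, hookSum, sum_mul_sum]
    simp_rw [mul_sum]
    refine sum_congr rfl fun l hl ↦ sum_congr rfl fun r hr ↦ ?_
    rw [BinaryTree.mem_treesOfNumNodesEq] at hl hr
    rw [HasAntidiagonal.mem_antidiagonal] at hp
    show f (l.numNodes + r.numNodes + 1) * hookProd f l * hookProd f r = _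
    rw [hl, hr, hp, mul_assoc]
  · simp_rw [Set.PairwiseDisjoint, Set.Pairwise, disjoint_left]
    aesop

theorem factorial_mul_hookSum (n : ℕ) :
    (n.factorial : ℚ) * hookSum (fun h ↦ 1 + 1 / (h : ℚ)) n
      = 2 ^ n * ((n : ℚ) + 1) ^ (n - 1) := by
  induction n using Nat.strong_induction_on with
  | _ n ih =>
    rcases n with _ | n
    · simp [hookSum_zero]
    set S := hookSum (fun h ↦ 1 + 1 / (h : ℚ))
    have term : ∀ p ∈ antidiagonal n, (n.factorial : ℚ) * (S p.1 * S p.2)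
        = 2 ^ n *
          (n.choose p.1 * ((p.1 : ℚ) + 1) ^ (p.1 - 1) * ((p.2 : ℚ) + 1) ^ (p.2 - 1)) := by
      intro p hp
      rw [HasAntidiagonal.mem_antidiagonal] at hp
      have hfac : (n.factorial : ℚ) = n.choose p.1 * p.1.factorial * p.2.factorial := by
        rw [← hp, Nat.choose_symm_add]
        exact_mod_cast (Nat.add_choose_mul_factorial_mul_factorial p.1 p.2).symm
      rw [hfac, ← hp, pow_add]
      linear_combination ((p.1 + p.2).choose p.1 : ℚ) *
        (p.2.factorial * S p.2 * ih p.1 (by omega)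
          + 2 ^ p.1 * ((p.1 : ℚ) + 1) ^ (p.1 - 1) * ih p.2 (by omega))
    calc ((n + 1).factorial : ℚ) * S (n + 1)
        = ((n : ℚ) + 2) * ∑ p ∈ antidiagonal n, (n.factorial : ℚ) * (S p.1 * S p.2) := by
          rw [show S (n + 1) = _ from hookSum_succ _ n, ← mul_sum, Nat.factorial_succ]
          push_cast
          field_simp
          ring
      _ = 2 ^ n * (((n : ℚ) + 2) * ∑ p ∈ antidiagonal n,
            n.choose p.1 * ((p.1 : ℚ) + 1) ^ (p.1 - 1) * ((p.2 : ℚ) + 1) ^ (p.2 - 1)) := by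
          rw [sum_congr rfl term, ← mul_sum]
          ring
      _ = 2 ^ (n + 1) * (((n + 1 : ℕ) : ℚ) + 1) ^ (n + 1 - 1) := by
          rw [add_two_mul_sum_antidiagonal_choose_mul_add_one_pow_mul_add_one_pow,
            Nat.add_sub_cancel]
          push_cast
          ring

theorem stmt7_general (n : ℕ) :
    ((n : ℚ) + 1) ^ (n - 1)
      = (n.factorial : ℚ) / 2 ^ n *
          ∑ T ∈ BinaryTree.treesOfNumNodesEq n, hookProd (fun h => 1 + 1 / (h : ℚ)) T := by
  rw [div_mul_eq_mul_div, eq_div_iff (by positivity)]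
  exact ((factorial_mul_hookSum n).trans (mul_comm _ _)).symm

/-- Postnikov's hook length formula:
`(n+1)^(n-1) = (n!/2^n) · Σ_{T ∈ 𝒯_n} ∏_{v ∈ T} (1 + 1/h_v)`,
the sum being over all plane binary trees with `n` vertices. -/
theorem stmt7 (n : ℕ) (hn : 1 ≤ n) :
    ((n : ℚ) + 1) ^ (n - 1)
      = (n.factorial : ℚ) / 2 ^ n *
          ∑ T ∈ BinaryTree.treesOfNumNodesEq n, hookProd (fun h => 1 + 1 / (h : ℚ)) T :=
  stmt7_general n
end

section
/- Let n ≥ 2 and let s_i denote the adjacent transposition (i, i+1) in the symmetric group S_n for 1 ≤ i ≤ n−1. For every bijection σ of {1,…,n−1}, the product c = s_{σ(1)} s_{σ(2)} ⋯ s_{σ(n−1)} is an n-cycle of the form (i_1, i_2, …, i_n) for some unimodal sequence i_1,…,i_n that is a permutation of 1,…,n; that is, there exist i_1,…,i_n, a rearrangement of 1,…,n, with i_1 < i_2 < … < i_k > i_{k+1} > … > i_n for some k, such that c(i_j) = i_{j+1} for 1 ≤ j < n and c(i_n) = i_1. -/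
/-!
Indices are 0-based: `Fin n` stands for `{1, …, n}` and `adjSwap i = (i i+1)` for `s_{i+1}`.

Induct on `n`, working in `Perm ℕ` and recording a word by its list of indices. When each of
`0, …, n` occurs once, write the word as `p ++ n :: q`; by induction `p ++ q` multiplies out to the
cycle of a unimodal list with peak `n`. Since `adjSwap n` commutes with `adjSwap i` for
`i + 1 < n`, it can be moved to the end of the word when `n - 1` occurs in `p`, and to the front
otherwise. Multiplying the cycle by `(n n+1)` on the right, resp. left, inserts `n + 1` just after,
resp. just before, the peak `n`, and the list stays unimodal with the new peak `n + 1`.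
-/

open Equiv List

theorem Equiv.Perm.extendDomain_swap {α β : Type*} [DecidableEq α] [DecidableEq β]
    {p : β → Prop} [DecidablePred p] (f : α ≃ Subtype p) (a b : α) :
    (swap a b).extendDomain f = swap (f a : β) (f b) := by
  ext x
  by_cases hx : p x
  · obtain ⟨y, hy⟩ := f.surjective ⟨x, hx⟩
    obtain rfl : x = f y := by simp [hy]
    rw [Perm.extendDomain_apply_image]
    simp only [swap_apply_def, Subtype.coe_inj, f.apply_eq_iff_eq]
    split_ifs <;> simp_all
  · rw [Perm.extendDomain_apply_not_subtype _ _ hx, swap_apply_of_ne_of_ne] <;>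
      rintro rfl <;> exact hx (f _).2

theorem Fin.val_perm_apply_eq_extendDomain {n : ℕ} (g : Perm (Fin n)) (x : Fin n) :
    (g x : ℕ) = g.extendDomain Fin.equivSubtype x :=
  (g.extendDomain_apply_subtype Fin.equivSubtype x.isLt).symm

theorem Equiv.Perm.ofFn_val_perm_range {n : ℕ} (σ : Perm (Fin n)) :
    ofFn (fun j => (σ j : ℕ)) ~ range n := by
  rw [← map_coe_finRange_eq_range, ← ofFn_id, map_ofFn]
  exact ofFn_comp_perm σ _

namespace List

variable {α : Type*} [DecidableEq α]

theorem formPerm_insert_before {a b : List α} {x y : α} (h : (a ++ y :: x :: b).Nodup) :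
    (a ++ y :: x :: b).formPerm = Equiv.swap y x * (a ++ x :: b).formPerm := by
  have h' : (a ++ x :: b).Nodup := h.sublist ((sublist_cons_self y _).append_left a)
  rw [← formPerm_rotate _ h a.length, ← formPerm_rotate _ h' a.length,
    rotate_append_length_eq, rotate_append_length_eq]
  simp only [cons_append, formPerm_cons_cons]

theorem formPerm_insert_after {a b : List α} {x y : α} (h : (a ++ x :: y :: b).Nodup) :
    (a ++ x :: y :: b).formPerm = (a ++ x :: b).formPerm * Equiv.swap x y := by
  have hr : (a ++ x :: y :: b).reverse = b.reverse ++ y :: x :: a.reverse := by simp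
  have h' : (b.reverse ++ y :: x :: a.reverse).Nodup := hr ▸ nodup_reverse.2 h
  rw [← inv_inv (formPerm (a ++ x :: y :: b)), ← formPerm_reverse, hr,
    formPerm_insert_before h', mul_inv_rev, ← formPerm_reverse, Equiv.swap_inv,
    Equiv.swap_comm]
  simp

end List

def IsUnimodal {α : Type*} [Preorder α] (a : List α) (m : α) (b : List α) : Prop :=
  (a ++ [m]).Pairwise (· < ·) ∧ (m :: b).Pairwise (· > ·)

namespace IsUnimodal

variable {α : Type*} [Preorder α] {a b : List α} {m m' : α}

theorem append_peak (h : IsUnimodal a m b) (hm : m < m') : IsUnimodal (a ++ [m]) m' b := by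
  refine ⟨pairwise_append.2 ⟨h.1, pairwise_singleton _ _, ?_⟩,
    pairwise_cons.2 ⟨fun x hx => (rel_of_pairwise_cons h.2 hx).trans hm, (pairwise_cons.1 h.2).2⟩⟩
  simp only [mem_append, mem_singleton, forall_eq]
  rintro x (hx | rfl)
  exacts [((pairwise_append.1 h.1).2.2 x hx m (mem_singleton_self m)).trans hm, hm]

theorem cons_peak (h : IsUnimodal a m b) (hm : m < m') : IsUnimodal a m' (m :: b) := by
  refine ⟨pairwise_append.2 ⟨(pairwise_append.1 h.1).1, pairwise_singleton _ _, ?_⟩,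
    pairwise_cons.2 ⟨?_, h.2⟩⟩
  · simp only [mem_singleton, forall_eq]
    exact fun x hx => ((pairwise_append.1 h.1).2.2 x hx m (mem_singleton_self m)).trans hm
  · simp only [mem_cons]
    rintro x (rfl | hx)
    exacts [hm, (rel_of_pairwise_cons h.2 hx).trans hm]

theorem getElem_lt_getElem_of_le_length (h : IsUnimodal a m b) {i j : ℕ} (hij : i < j)
    (hj : j ≤ a.length) (hjl : j < (a ++ m :: b).length) :
    (a ++ m :: b)[i] < (a ++ m :: b)[j] := by
  have hj' : j < (a ++ [m]).length := by simpa [Nat.lt_succ_iff] using hj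
  simp only [append_cons a m b]
  rw [getElem_append_left (hij.trans hj'), getElem_append_left hj']
  exact pairwise_iff_getElem.1 h.1 i j _ hj' hij

theorem getElem_lt_getElem_of_length_le (h : IsUnimodal a m b) {i j : ℕ} (hi : a.length ≤ i)
    (hij : i < j) (hjl : j < (a ++ m :: b).length) :
    (a ++ m :: b)[j] < (a ++ m :: b)[i] := by
  rw [getElem_append_right hi, getElem_append_right (hi.trans hij.le)]
  exact pairwise_iff_getElem.1 h.2 _ _ _ _ (by omega)

end IsUnimodal

abbrev adjSwap (i : ℕ) : Perm ℕ := swap i (i + 1)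

theorem commute_adjSwap_prod {n : ℕ} {l : List ℕ} (h : ∀ i ∈ l, i + 1 < n) :
    Commute (adjSwap n) (l.map adjSwap).prod := by
  refine Commute.list_prod_right _ _ fun s hs => ?_
  obtain ⟨i, hi, rfl⟩ := mem_map.1 hs
  have := h i hi
  exact (Perm.disjoint_swap_swap (by simp; omega)).commute

theorem prod_map_adjSwap_insert_of_right {n : ℕ} (p : List ℕ) {q : List ℕ}
    (hq : ∀ i ∈ q, i + 1 < n) :
    ((p ++ n :: q).map adjSwap).prod = ((p ++ q).map adjSwap).prod * adjSwap n := by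
  simp only [map_append, map_cons, prod_append, prod_cons, mul_assoc,
    (commute_adjSwap_prod hq).eq]

theorem prod_map_adjSwap_insert_of_left {n : ℕ} {p : List ℕ} (q : List ℕ)
    (hp : ∀ i ∈ p, i + 1 < n) :
    ((p ++ n :: q).map adjSwap).prod = adjSwap n * ((p ++ q).map adjSwap).prod := by
  simp only [map_append, map_cons, prod_append, prod_cons, ← mul_assoc,
    (commute_adjSwap_prod hp).eq]

theorem cons_perm_range_succ {n : ℕ} {l : List ℕ} (h : l ~ range n) : n :: l ~ range (n + 1) := by
  rw [range_succ]
  exact (h.cons n).trans (perm_append_singleton _ _).symm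

theorem exists_unimodal_formPerm_eq_prod_map_adjSwap (n : ℕ) (w : List ℕ) (hw : w ~ range n) :
    ∃ a b : List ℕ, a ++ n :: b ~ range (n + 1) ∧ IsUnimodal a n b ∧
      (w.map adjSwap).prod = (a ++ n :: b).formPerm := by
  induction n generalizing w with
  | zero =>
    obtain rfl : w = [] := by simpa using hw
    exact ⟨[], [], by simp, by simp [IsUnimodal], by simp⟩
  | succ n ih =>
    obtain ⟨p, q, rfl⟩ := append_of_mem (hw.mem_iff.2 (mem_range.2 n.lt_succ_self))
    have hpq : p ++ q ~ range n :=
      (perm_middle.symm.trans (hw.trans (cons_perm_range_succ (.refl _)).symm)).cons_inv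
    have hlt : ∀ i ∈ p ++ q, i < n := fun i hi => mem_range.1 (hpq.subset hi)
    obtain ⟨a, b, hab, hu, hprod⟩ := ih (p ++ q) hpq
    have hab' : (n + 1) :: (a ++ n :: b) ~ range (n + 2) := cons_perm_range_succ hab
    by_cases hp : n - 1 ∈ p
    · have hq : ∀ i ∈ q, i + 1 < n := by
        intro i hi
        have : i ≠ n - 1 := by
          rintro rfl
          exact disjoint_of_nodup_append (hpq.nodup_iff.2 nodup_range) hp hi
        have := hlt i (mem_append_right p hi)
        omega
      have hperm : a ++ [n] ++ (n + 1) :: b ~ range (n + 2) :=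
        perm_middle.trans (by simpa using hab')
      refine ⟨a ++ [n], b, hperm, hu.append_peak n.lt_succ_self, ?_⟩
      rw [prod_map_adjSwap_insert_of_right p hq, hprod, append_assoc, singleton_append,
        formPerm_insert_after (by simpa using hperm.nodup_iff.2 nodup_range)]
    · have hp' : ∀ i ∈ p, i + 1 < n := by
        intro i hi
        have : i ≠ n - 1 := fun h => hp (h ▸ hi)
        have := hlt i (mem_append_left q hi)
        omega
      have hperm : a ++ (n + 1) :: n :: b ~ range (n + 2) := perm_middle.trans hab'
      refine ⟨a, n :: b, hperm, hu.cons_peak n.lt_succ_self, ?_⟩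
      rw [prod_map_adjSwap_insert_of_left q hp', hprod,
        formPerm_insert_before (hperm.nodup_iff.2 nodup_range), Equiv.swap_comm]

theorem exists_unimodal_cycle_of_formPerm {n : ℕ} (h1 : 1 < n) {c : Perm (Fin n)}
    {l₁ l₂ : List ℕ} {m : ℕ} (hl : l₁ ++ m :: l₂ ~ range n) (hu : IsUnimodal l₁ m l₂)
    (hc : ∀ x : Fin n, (c x : ℕ) = (l₁ ++ m :: l₂).formPerm x) :
    ∃ is : Fin n → Fin n, Function.Bijective is ∧
      (∃ k : Fin n,
        (∀ a b : Fin n, a < b → b ≤ k → is a < is b) ∧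
        (∀ a b : Fin n, k ≤ a → a < b → is b < is a)) ∧
      ∀ j : Fin n, c (is j) = is (j + ⟨1, h1⟩) := by
  set l := l₁ ++ m :: l₂
  have hlen : l.length = n := hl.length_eq.trans length_range
  have hnd : l.Nodup := hl.nodup_iff.2 nodup_range
  let is (j : Fin n) : Fin n := ⟨l[(j : ℕ)], mem_range.1 (hl.subset (getElem_mem _))⟩
  have hk : l₁.length < n := by simp [← hlen, l]
  refine ⟨is, ?_, ⟨⟨l₁.length, hk⟩, ?_, ?_⟩, ?_⟩
  · refine Finite.injective_iff_bijective.1 fun i j hij => Fin.ext ?_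
    exact hnd.getElem_inj_iff.1 (Fin.mk.inj hij)
  · exact fun i j hij hj => hu.getElem_lt_getElem_of_le_length hij hj _
  · exact fun i j hi hij => hu.getElem_lt_getElem_of_length_le hi hij _
  · intro j
    ext
    simp only [is, hc]
    rw [formPerm_apply_getElem l hnd]
    simp only [Fin.val_add, hlen]

/-- Every standard Coxeter element of `S_n` (a product `s_{σ(1)} ⋯ s_{σ(n-1)}` of
the `n-1` adjacent transpositions, each used once, in an arbitrary order `σ`) is
an `n`-cycle `(i_1, i_2, …, i_n)` for some unimodal sequence `i_1, …, i_n` that is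
a rearrangement of `1, …, n`. -/
theorem stmt16 (n : ℕ) (hn : 2 ≤ n) (σ : Equiv.Perm (Fin (n - 1)))
    (c : Equiv.Perm (Fin n))
    (hc : c = (List.ofFn fun j : Fin (n - 1) =>
        Equiv.swap (⟨(σ j : ℕ), by have := (σ j).isLt; omega⟩ : Fin n)
          (⟨(σ j : ℕ) + 1, by have := (σ j).isLt; omega⟩ : Fin n)).prod) :
    ∃ is : Fin n → Fin n, Function.Bijective is ∧
      (∃ k : Fin n,
        (∀ a b : Fin n, a < b → b ≤ k → is a < is b) ∧
        (∀ a b : Fin n, k ≤ a → a < b → is b < is a)) ∧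
      ∀ j : Fin n, c (is j) = is (j + (⟨1, by omega⟩ : Fin n)) := by
  obtain ⟨a, b, hl, hu, hprod⟩ :=
    exists_unimodal_formPerm_eq_prod_map_adjSwap _ _ σ.ofFn_val_perm_range
  rw [Nat.sub_add_cancel (by omega : 1 ≤ n)] at hl
  refine exists_unimodal_cycle_of_formPerm _ hl hu fun x => ?_
  rw [Fin.val_perm_apply_eq_extendDomain, hc, ← Perm.extendDomainHom_apply, map_list_prod,
    map_ofFn, ← hprod, map_ofFn]
  simp [Function.comp_def, Perm.extendDomain_swap]
end
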